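/- arXiv:1901.10684 — 2 statements merged into one kernel-verified Lean document; each statement's English description precedes it below -/
import Mathlib

section
/- Let E be a finite-dimensional real inner product space, U ⊆ E an open set, x ∈ U, and let χ, u : U → ℝ be twice continuously differentiable functions with χ ≥ 0 and u ≥ 1 on U. Set ρ = e^{−χ}, h = ρ·(u−1) + 1, φ = −log u, A = ρ(u−1)/h, and B = ρu/h. Then −Δ(log h)(x) ≤ A(x)·Δχ(x) + B(x)·Δφ(x) + 2·‖∇ρ(x)‖·‖∇u(x)‖/h(x)². -/
/-!
In a direction `v`, write `'` for the derivative along `v`. From `h = ρ(u-1)+1`, `ρ' = -ρχ'` and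
`φ' = -u'/u` one gets the exact identity
`-(log h)'' = A χ'' + B φ'' - A(1-A) χ'² - B(1-B) φ'² - 2 ρ'u'/h²`.
Since `χ ≥ 0` and `u ≥ 1` give `0 ≤ A, B ≤ 1`, the two squares can be dropped. Summing over
an orthonormal basis turns second directional derivatives into Laplacians and `∑ ρ'u'` into
`⟪∇ρ, ∇u⟫`, which Cauchy–Schwarz bounds by `‖∇ρ‖ ‖∇u‖`.
-/

/-- The Laplacian of `f : E → ℝ` at `x`: the trace of the Hessian (second iterated
Fréchet derivative) computed in an orthonormal basis of `E`. -/
noncomputable def laplacian {E : Type*} [NormedAddCommGroup E] [InnerProductSpace ℝ E]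
    [FiniteDimensional ℝ E] (f : E → ℝ) (x : E) : ℝ :=
  ∑ i, iteratedFDeriv ℝ 2 f x ![(stdOrthonormalBasis ℝ E) i, (stdOrthonormalBasis ℝ E) i]

open Filter Topology

section SecondDirDeriv

variable {E : Type*} [NormedAddCommGroup E] [NormedSpace ℝ E] {f g : E → ℝ} {x : E}

noncomputable def secondDirDeriv (f : E → ℝ) (x v : E) : ℝ :=
  fderiv ℝ (fun y => fderiv ℝ f y v) x v

theorem ContDiffAt.differentiableAt_fderiv_apply (hf : ContDiffAt ℝ 2 f x) (v : E) :
    DifferentiableAt ℝ (fun y => fderiv ℝ f y v) x :=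
  ((hf.fderiv_right (m := 1) le_rfl).differentiableAt one_ne_zero).clm_apply
    (differentiableAt_const v)

theorem ContDiffAt.iteratedFDeriv_two_apply_self (hf : ContDiffAt ℝ 2 f x) (v : E) :
    iteratedFDeriv ℝ 2 f x ![v, v] = secondDirDeriv f x v := by
  have hd := (hf.fderiv_right (m := 1) le_rfl).differentiableAt one_ne_zero
  rw [iteratedFDeriv_two_apply, secondDirDeriv, fderiv_clm_apply hd (differentiableAt_const v)]
  simp

theorem ContDiffAt.eventually_differentiableAt (hf : ContDiffAt ℝ 2 f x) :
    ∀ᶠ y in 𝓝 x, DifferentiableAt ℝ f y :=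
  (hf.eventually (by simp)).mono fun _ hy => hy.differentiableAt two_ne_zero

theorem fderiv_comp_apply_of_hasDerivAt {g : ℝ → ℝ} {g' : ℝ} (hf : DifferentiableAt ℝ f x)
    (hg : HasDerivAt g g' (f x)) (v : E) :
    fderiv ℝ (fun y => g (f y)) x v = g' * fderiv ℝ f x v := by
  have hcomp : HasFDerivAt (fun y => g (f y)) (g' • fderiv ℝ f x) x :=
    hg.comp_hasFDerivAt x hf.hasFDerivAt
  rw [hcomp.fderiv]
  rfl

theorem secondDirDeriv_comp {g g' : ℝ → ℝ} {g'' : ℝ} (hf : ContDiffAt ℝ 2 f x)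
    (hg : ∀ᶠ t in 𝓝 (f x), HasDerivAt g (g' t) t) (hg' : HasDerivAt g' g'' (f x)) (v : E) :
    secondDirDeriv (fun y => g (f y)) x v =
      g'' * fderiv ℝ f x v ^ 2 + g' (f x) * secondDirDeriv f x v := by
  have hfirst : (fun y => fderiv ℝ (fun z => g (f z)) y v) =ᶠ[𝓝 x]
      fun y => g' (f y) * fderiv ℝ f y v := by
    filter_upwards [hf.eventually_differentiableAt, hf.continuousAt.eventually hg]
      with y hfy hgy
    exact fderiv_comp_apply_of_hasDerivAt hfy hgy v
  have hprod : HasFDerivAt (fun y => g' (f y) * fderiv ℝ f y v) _ x :=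
    (hg'.comp_hasFDerivAt x (hf.differentiableAt two_ne_zero).hasFDerivAt).mul
      (hf.differentiableAt_fderiv_apply v).hasFDerivAt
  rw [secondDirDeriv, hfirst.fderiv_eq, hprod.fderiv, secondDirDeriv]
  simp only [add_apply, smul_apply, smul_eq_mul, Function.comp_apply]
  ring

theorem secondDirDeriv_mul (hf : ContDiffAt ℝ 2 f x) (hg : ContDiffAt ℝ 2 g x) (v : E) :
    secondDirDeriv (fun y => f y * g y) x v =
      secondDirDeriv f x v * g x + 2 * (fderiv ℝ f x v * fderiv ℝ g x v)
        + f x * secondDirDeriv g x v := by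
  have hfirst : (fun y => fderiv ℝ (fun z => f z * g z) y v) =ᶠ[𝓝 x]
      fun y => f y * fderiv ℝ g y v + g y * fderiv ℝ f y v := by
    filter_upwards [hf.eventually_differentiableAt, hg.eventually_differentiableAt]
      with y hfy hgy
    rw [fderiv_fun_mul hfy hgy]
    rfl
  have hsum : HasFDerivAt (fun y => f y * fderiv ℝ g y v + g y * fderiv ℝ f y v) _ x :=
    (hf.differentiableAt two_ne_zero |>.hasFDerivAt.mul
        (hg.differentiableAt_fderiv_apply v).hasFDerivAt).add
      (hg.differentiableAt two_ne_zero |>.hasFDerivAt.mul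
        (hf.differentiableAt_fderiv_apply v).hasFDerivAt)
  rw [secondDirDeriv, hfirst.fderiv_eq, hsum.fderiv, secondDirDeriv, secondDirDeriv]
  simp only [add_apply, smul_apply, smul_eq_mul]
  ring

theorem secondDirDeriv_add_const (c : ℝ) (v : E) :
    secondDirDeriv (fun y => f y + c) x v = secondDirDeriv f x v := by
  simp only [secondDirDeriv, fderiv_add_const]

theorem secondDirDeriv_sub_const (c : ℝ) (v : E) :
    secondDirDeriv (fun y => f y - c) x v = secondDirDeriv f x v := by
  simp only [secondDirDeriv, fderiv_sub_const]

end SecondDirDeriv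

section InnerProductSpace

variable {E : Type*} [NormedAddCommGroup E] [InnerProductSpace ℝ E] [FiniteDimensional ℝ E]
  {f : E → ℝ} {x : E}

theorem ContDiffAt.laplacian_eq_sum_secondDirDeriv (hf : ContDiffAt ℝ 2 f x) :
    laplacian f x = ∑ i, secondDirDeriv f x (stdOrthonormalBasis ℝ E i) := by
  simp only [laplacian, hf.iteratedFDeriv_two_apply_self]

theorem sum_fderiv_mul_fderiv_stdOrthonormalBasis (f g : E → ℝ) (x : E) :
    ∑ i, fderiv ℝ f x (stdOrthonormalBasis ℝ E i) * fderiv ℝ g x (stdOrthonormalBasis ℝ E i) =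
      inner ℝ (gradient f x) (gradient g x) := by
  simp only [← toDual_gradient, InnerProductSpace.toDual_apply_apply,
    ← real_inner_comm (gradient g x)]
  exact (stdOrthonormalBasis ℝ E).sum_inner_mul_inner _ _

end InnerProductSpace

section InterpolatedMetric

variable {E : Type*} [NormedAddCommGroup E] [NormedSpace ℝ E]
  {χ u ρ h φ A B : E → ℝ} {x : E}

theorem neg_secondDirDeriv_log_interpolated_eq (hχ : ContDiffAt ℝ 2 χ x)
    (hu : ContDiffAt ℝ 2 u x) (hu0 : u x ≠ 0) (hh0 : h x ≠ 0)
    (hρ : ∀ y, ρ y = Real.exp (-χ y)) (hh : ∀ y, h y = ρ y * (u y - 1) + 1)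
    (hφ : ∀ y, φ y = -Real.log (u y))
    (hA : A x = ρ x * (u x - 1) / h x) (hB : B x = ρ x * u x / h x) (v : E) :
    -secondDirDeriv (fun y => Real.log (h y)) x v =
      A x * secondDirDeriv χ x v + B x * secondDirDeriv φ x v
        - A x * (1 - A x) * fderiv ℝ χ x v ^ 2 - B x * (1 - B x) * fderiv ℝ φ x v ^ 2
        - 2 * (fderiv ℝ ρ x v * fderiv ℝ u x v) / h x ^ 2 := by
  obtain rfl : ρ = fun y => Real.exp (-χ y) := funext hρ
  obtain rfl : h = fun y => Real.exp (-χ y) * (u y - 1) + 1 := funext hh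
  obtain rfl : φ = fun y => -Real.log (u y) := funext hφ
  have hexp : ∀ t : ℝ, HasDerivAt (fun s => Real.exp (-s)) (-Real.exp (-t)) t := fun t => by
    simpa using (hasDerivAt_neg t).exp
  have hexp' : HasDerivAt (fun s => -Real.exp (-s)) (Real.exp (-χ x)) (χ x) := by
    simpa using (hexp (χ x)).fun_neg
  have hlog : ∀ t : ℝ, t ≠ 0 → HasDerivAt (fun s => -Real.log s) (-t⁻¹) t := fun t ht =>
    (Real.hasDerivAt_log ht).fun_neg
  have hlog' : HasDerivAt (fun s : ℝ => -s⁻¹) ((u x ^ 2)⁻¹) (u x) := by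
    simpa using (hasDerivAt_inv hu0).fun_neg
  have hρ2 : ContDiffAt ℝ 2 (fun y => Real.exp (-χ y)) x := hχ.neg.exp
  have hu1 : ContDiffAt ℝ 2 (fun y => u y - 1) x := hu.sub contDiffAt_const
  have dρ : fderiv ℝ (fun y => Real.exp (-χ y)) x v = -Real.exp (-χ x) * fderiv ℝ χ x v :=
    fderiv_comp_apply_of_hasDerivAt (hχ.differentiableAt two_ne_zero) (hexp _) v
  have d2ρ := secondDirDeriv_comp hχ (Eventually.of_forall hexp) hexp' v
  have dφ : fderiv ℝ (fun y => -Real.log (u y)) x v = -(u x)⁻¹ * fderiv ℝ u x v :=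
    fderiv_comp_apply_of_hasDerivAt (hu.differentiableAt two_ne_zero) (hlog _ hu0) v
  have d2φ := secondDirDeriv_comp hu ((eventually_ne_nhds hu0).mono hlog) hlog' v
  have dh : fderiv ℝ (fun y => Real.exp (-χ y) * (u y - 1) + 1) x v =
      fderiv ℝ (fun y => Real.exp (-χ y)) x v * (u x - 1)
        + Real.exp (-χ x) * fderiv ℝ u x v := by
    rw [fderiv_add_const, fderiv_fun_mul (hρ2.differentiableAt two_ne_zero)
      (hu1.differentiableAt two_ne_zero), fderiv_sub_const]
    simp only [add_apply, smul_apply, smul_eq_mul]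
    ring
  have d2logh := secondDirDeriv_comp ((hρ2.mul hu1).add contDiffAt_const)
    ((eventually_ne_nhds hh0).mono fun _ => Real.hasDerivAt_log) (hasDerivAt_inv hh0) v
  rw [hA, hB, d2logh, dh, secondDirDeriv_add_const, secondDirDeriv_mul hρ2 hu1,
    secondDirDeriv_sub_const, fderiv_sub_const, d2ρ, dφ, d2φ, dρ]
  field_simp
  ring

theorem neg_secondDirDeriv_log_interpolated_le (hχ : ContDiffAt ℝ 2 χ x)
    (hu : ContDiffAt ℝ 2 u x) (hχ0 : 0 ≤ χ x) (hu1 : 1 ≤ u x)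
    (hρ : ∀ y, ρ y = Real.exp (-χ y)) (hh : ∀ y, h y = ρ y * (u y - 1) + 1)
    (hφ : ∀ y, φ y = -Real.log (u y))
    (hA : A x = ρ x * (u x - 1) / h x) (hB : B x = ρ x * u x / h x) (v : E) :
    -secondDirDeriv (fun y => Real.log (h y)) x v ≤
      A x * secondDirDeriv χ x v + B x * secondDirDeriv φ x v
        - 2 * (fderiv ℝ ρ x v * fderiv ℝ u x v) / h x ^ 2 := by
  have hρ0 : 0 < ρ x := hρ x ▸ Real.exp_pos _
  have hρ1 : ρ x ≤ 1 := hρ x ▸ Real.exp_le_one_iff.2 (neg_nonpos.2 hχ0)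
  have hh0 : 0 < h x := by rw [hh]; nlinarith
  have hA0 : 0 ≤ A x := by rw [hA]; exact div_nonneg (by nlinarith) hh0.le
  have hA1 : A x ≤ 1 := by rw [hA, div_le_one hh0, hh]; linarith
  have hB0 : 0 ≤ B x := by rw [hB]; exact div_nonneg (by nlinarith) hh0.le
  have hB1 : B x ≤ 1 := by rw [hB, div_le_one hh0, hh]; nlinarith
  rw [neg_secondDirDeriv_log_interpolated_eq hχ hu (by positivity) hh0.ne' hρ hh hφ hA hB]
  have hAχ := mul_nonneg (mul_nonneg hA0 (sub_nonneg.2 hA1)) (sq_nonneg (fderiv ℝ χ x v))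
  have hBφ := mul_nonneg (mul_nonneg hB0 (sub_nonneg.2 hB1)) (sq_nonneg (fderiv ℝ φ x v))
  linarith

end InterpolatedMetric

open Finset in
/-- For `C²` functions `χ ≥ 0` and `u ≥ 1` on an open set `U`, with
`ρ = e^{-χ}`, `h = ρ(u-1)+1`, `φ = -log u`, `A = ρ(u-1)/h`, `B = ρu/h`, one has
`-Δ(log h)(x) ≤ A(x)Δχ(x) + B(x)Δφ(x) + 2‖∇ρ(x)‖‖∇u(x)‖/h(x)²`. -/
theorem neg_laplacian_log_interpolated_metric_le
    {E : Type*} [NormedAddCommGroup E] [InnerProductSpace ℝ E] [FiniteDimensional ℝ E]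
    (U : Set E) (hU : IsOpen U) (x : E) (hx : x ∈ U)
    (χ u : E → ℝ) (hχ : ContDiffOn ℝ 2 χ U) (hu : ContDiffOn ℝ 2 u U)
    (hχ0 : ∀ y ∈ U, 0 ≤ χ y) (hu1 : ∀ y ∈ U, 1 ≤ u y)
    (ρ h φ : E → ℝ) (A B : E → ℝ)
    (hρ : ∀ y, ρ y = Real.exp (-χ y))
    (hh : ∀ y, h y = ρ y * (u y - 1) + 1)
    (hφ : ∀ y, φ y = -Real.log (u y))
    (hA : ∀ y, A y = ρ y * (u y - 1) / h y)
    (hB : ∀ y, B y = ρ y * u y / h y) :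
    -laplacian (fun y => Real.log (h y)) x ≤
      A x * laplacian χ x + B x * laplacian φ x
        + 2 * ‖gradient ρ x‖ * ‖gradient u x‖ / (h x) ^ 2 := by
  have hχx := hχ.contDiffAt (hU.mem_nhds hx)
  have hux := hu.contDiffAt (hU.mem_nhds hx)
  have hu0 : 0 < u x := by linarith [hu1 x hx]
  have hh0 : 0 < h x := by
    rw [hh, hρ]; nlinarith [Real.exp_pos (-χ x), hu1 x hx]
  have hρC : ContDiffAt ℝ 2 ρ x := funext hρ ▸ hχx.neg.exp
  have hhC : ContDiffAt ℝ 2 h x :=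
    funext hh ▸ (hρC.mul (hux.sub contDiffAt_const)).add contDiffAt_const
  have hφC : ContDiffAt ℝ 2 φ x := funext hφ ▸ (hux.log hu0.ne').neg
  have hdir := neg_secondDirDeriv_log_interpolated_le hχx hux (hχ0 x hx) (hu1 x hx) hρ hh hφ
    (hA x) (hB x)
  rw [(hhC.log hh0.ne').laplacian_eq_sum_secondDirDeriv, hχx.laplacian_eq_sum_secondDirDeriv,
    hφC.laplacian_eq_sum_secondDirDeriv, ← sum_neg_distrib]
  calc _ ≤ _ := sum_le_sum fun i _ => hdir (stdOrthonormalBasis ℝ E i)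
    _ = A x * ∑ i, secondDirDeriv χ x (stdOrthonormalBasis ℝ E i)
          + B x * ∑ i, secondDirDeriv φ x (stdOrthonormalBasis ℝ E i)
          + 2 * -inner ℝ (gradient ρ x) (gradient u x) / h x ^ 2 := by
      rw [← sum_fderiv_mul_fderiv_stdOrthonormalBasis, sum_sub_distrib, sum_add_distrib,
        ← mul_sum, ← mul_sum, ← sum_div, ← mul_sum]
      ring
    _ ≤ _ := by
      rw [mul_assoc 2]
      gcongr
      exact (neg_le_abs _).trans (abs_real_inner_le_norm _ _)
end

section
/- Let m ≥ 1, w, v ∈ ℂ^m, and s ∈ ℝ with 0 ≤ s ≤ 1. Define g : ℂ → ℝ by g(t) = log(1 + ‖w + t·v‖²). Then Δg(0) ≥ s·‖∇g(0)‖²/(1+‖w‖²); equivalently, Δ(−g)(0) + s·‖∇g(0)‖²/(1+‖w‖²) ≤ 0. -/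
/-- The Laplacian `∂²g/∂x² + ∂²g/∂y²` of `g : ℂ → ℝ` at `t`, with `ℂ` identified with
`ℝ²` via `t = x + iy`: the trace of the real Hessian in the orthonormal basis `{1, i}`. -/
noncomputable def laplacianC (g : ℂ → ℝ) (t : ℂ) : ℝ :=
  iteratedFDeriv ℝ 2 g t ![1, 1] + iteratedFDeriv ℝ 2 g t ![Complex.I, Complex.I]

/-!
Along the complex line, `q(t) = 1 + ‖w + t v‖² = C + 2⟪b, t⟫_ℝ + n|t|²` with `C = 1 + ‖w‖²`,
`b = conj ⟪w, v⟫` and `n = ‖v‖²`: a real quadratic on `ℂ = ℝ²` whose second-order part is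
isotropic. Hence `∇ log q (0) = (2/C) b` and `D² log q (0)(u, u) = 2n|u|²/C - 4⟪b, u⟫²/C²`, so
`Δ log q (0) = 4n/C - 4|b|²/C²`. The claim reduces to `(s + C)|b|² ≤ n C²`, which follows from
Cauchy–Schwarz `|b|² ≤ (C - 1) n` and `s ≤ 1`.
-/

open Real Topology
open scoped InnerProductSpace ComplexConjugate

section IsotropicQuadratic

variable {E : Type*} [NormedAddCommGroup E] [InnerProductSpace ℝ E]

noncomputable def isotropicQuadratic (C : ℝ) (b : E) (n : ℝ) (x : E) : ℝ :=
  C + 2 * ⟪b, x⟫_ℝ + n * ‖x‖ ^ 2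

variable (C : ℝ) (b : E) (n : ℝ)

theorem continuous_isotropicQuadratic : Continuous (isotropicQuadratic C b n) := by
  unfold isotropicQuadratic
  fun_prop

theorem isotropicQuadratic_zero : isotropicQuadratic C b n 0 = C := by
  simp [isotropicQuadratic]

theorem hasFDerivAt_isotropicQuadratic (x : E) :
    HasFDerivAt (isotropicQuadratic C b n) (innerSL ℝ (2 • (b + n • x))) x := by
  have h := (((innerSL ℝ b).hasFDerivAt (x := x)).const_mul 2).const_add C |>.add
    ((hasStrictFDerivAt_norm_sq x).hasFDerivAt.const_mul n)
  refine h.congr_fderiv ?_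
  ext u
  simp only [add_apply, smul_apply, coe_innerSL_apply,
    smul_eq_mul, nsmul_eq_mul, Nat.cast_ofNat, smul_add, map_add, map_nsmul, map_smul]
  ring

theorem hasFDerivAt_log_isotropicQuadratic {x : E} (hx : isotropicQuadratic C b n x ≠ 0) :
    HasFDerivAt (fun x => log (isotropicQuadratic C b n x))
      (innerSL ℝ ((2 / isotropicQuadratic C b n x) • (b + n • x))) x := by
  refine ((hasFDerivAt_isotropicQuadratic C b n x).log hx).congr_fderiv ?_
  ext u
  simp only [smul_add, map_add, map_nsmul, map_smul, add_apply,
    smul_apply, coe_innerSL_apply, nsmul_eq_mul, Nat.cast_ofNat, smul_eq_mul]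
  ring

theorem gradient_log_isotropicQuadratic_zero [CompleteSpace E] (hC : C ≠ 0) :
    gradient (fun x => log (isotropicQuadratic C b n x)) 0 = (2 / C) • b := by
  have h := hasFDerivAt_log_isotropicQuadratic C b n (x := 0) (by rwa [isotropicQuadratic_zero])
  rw [isotropicQuadratic_zero, smul_zero, add_zero] at h
  exact (hasGradientAt_iff_hasFDerivAt.2 h).gradient

theorem fderiv_fderiv_log_isotropicQuadratic_zero (hC : C ≠ 0) (u : E) :
    fderiv ℝ (fderiv ℝ (fun x => log (isotropicQuadratic C b n x))) 0 u u =
      2 * n * ‖u‖ ^ 2 / C - 4 * ⟪b, u⟫_ℝ ^ 2 / C ^ 2 := by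
  have hq0 : isotropicQuadratic C b n 0 ≠ 0 := by rwa [isotropicQuadratic_zero]
  have hfderiv : fderiv ℝ (fun x => log (isotropicQuadratic C b n x)) =ᶠ[𝓝 0]
      fun x => innerSL ℝ ((2 / isotropicQuadratic C b n x) • (b + n • x)) :=
    ((continuous_isotropicQuadratic C b n).continuousAt.eventually_ne hq0).mono
      fun x hx => (hasFDerivAt_log_isotropicQuadratic C b n hx).fderiv
  have hcoef := ((hasDerivAt_inv hq0).comp_hasFDerivAt 0
    (hasFDerivAt_isotropicQuadratic C b n 0)).const_mul 2
  have hvec := ((hasFDerivAt_id (𝕜 := ℝ) (0 : E)).const_smul n).const_add b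
  have h : HasFDerivAt
      (fun x => innerSL ℝ ((2 / isotropicQuadratic C b n x) • (b + n • x))) _ 0 :=
    (innerSL ℝ (E := E)).hasFDerivAt.comp 0 (hcoef.smul hvec)
  rw [hfderiv.fderiv_eq, h.fderiv]
  simp only [Function.comp_apply, isotropicQuadratic_zero, smul_zero, add_zero, map_nsmul,
    neg_smul, smul_neg, ContinuousLinearMap.comp_add, ContinuousLinearMap.comp_smulₛₗ,
    RingHom.id_apply, ContinuousLinearMap.comp_id, add_apply,
    smul_apply, ContinuousLinearMap.comp_apply,
    ContinuousLinearMap.smulRight_apply, neg_apply, innerSL_apply_apply ℝ,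
    nsmul_eq_mul, Nat.cast_ofNat, smul_eq_mul, map_neg, map_smul, real_inner_self_eq_norm_sq]
  field_simp
  ring

end IsotropicQuadratic

theorem laplacianC_log_isotropicQuadratic_zero (C : ℝ) (b : ℂ) (n : ℝ) (hC : C ≠ 0) :
    laplacianC (fun t => log (isotropicQuadratic C b n t)) 0 =
      4 * n / C - 4 * ‖b‖ ^ 2 / C ^ 2 := by
  rw [laplacianC, iteratedFDeriv_two_apply, iteratedFDeriv_two_apply]
  simp only [Matrix.cons_val_zero, Matrix.cons_val_one,
    fderiv_fderiv_log_isotropicQuadratic_zero C b n hC]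
  simp only [Complex.inner, norm_one, Complex.norm_I, one_pow, mul_one, one_mul, Complex.conj_re,
    Complex.conj_im, Complex.mul_re, Complex.I_re, Complex.I_im, zero_mul, mul_neg, sub_neg_eq_add,
    zero_add, Complex.sq_norm, Complex.normSq_apply]
  ring

theorem one_add_norm_add_smul_sq {F : Type*} [NormedAddCommGroup F] [InnerProductSpace ℂ F]
    (w v : F) (t : ℂ) :
    1 + ‖w + t • v‖ ^ 2 =
      isotropicQuadratic (1 + ‖w‖ ^ 2) (conj (inner ℂ w v)) (‖v‖ ^ 2) t := by
  rw [isotropicQuadratic, norm_add_sq (𝕜 := ℂ), inner_smul_right, norm_smul, Complex.inner]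
  simp only [Complex.conj_conj, RCLike.re_to_complex]
  ring

theorem laplacian_dominates_gradient_term_general (m : ℕ)
    (w v : EuclideanSpace ℂ (Fin m)) (s : ℝ) (hs1 : s ≤ 1) :
    s * ‖gradient (fun t : ℂ => Real.log (1 + ‖w + t • v‖ ^ 2)) 0‖ ^ 2 / (1 + ‖w‖ ^ 2) ≤
      laplacianC (fun t : ℂ => Real.log (1 + ‖w + t • v‖ ^ 2)) 0 := by
  set C := 1 + ‖w‖ ^ 2 with hC
  set b := conj (inner ℂ w v)
  have hCpos : 0 < C := by positivity
  have hb : ‖b‖ ^ 2 ≤ ‖w‖ ^ 2 * ‖v‖ ^ 2 := by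
    rw [← mul_pow, RCLike.norm_conj]
    exact pow_le_pow_left₀ (norm_nonneg _) (norm_inner_le_norm w v) 2
  have hreduced : (s + C) * ‖b‖ ^ 2 ≤ ‖v‖ ^ 2 * C ^ 2 := calc
    (s + C) * ‖b‖ ^ 2 ≤ (1 + C) * (‖w‖ ^ 2 * ‖v‖ ^ 2) := by gcongr
    _ = (C ^ 2 - 1) * ‖v‖ ^ 2 := by rw [hC]; ring
    _ ≤ ‖v‖ ^ 2 * C ^ 2 := by nlinarith [sq_nonneg ‖v‖]
  simp only [one_add_norm_add_smul_sq]
  rw [gradient_log_isotropicQuadratic_zero _ _ _ hCpos.ne',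
    laplacianC_log_isotropicQuadratic_zero _ _ _ hCpos.ne', norm_smul, mul_pow,
    Real.norm_of_nonneg (by positivity), div_le_iff₀ hCpos]
  field_simp
  linarith

/-- For `w, v ∈ ℂ^m`, `0 ≤ s ≤ 1`, and `g(t) = log(1 + ‖w + t·v‖²)`, one
has `Δg(0) ≥ s‖∇g(0)‖²/(1+‖w‖²)`, i.e. `Δ(−g)(0) + s‖∇g(0)‖²/(1+‖w‖²) ≤ 0`. -/
theorem laplacian_dominates_gradient_term (m : ℕ) (hm : 1 ≤ m)
    (w v : EuclideanSpace ℂ (Fin m)) (s : ℝ) (hs0 : 0 ≤ s) (hs1 : s ≤ 1) :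
    s * ‖gradient (fun t : ℂ => Real.log (1 + ‖w + t • v‖ ^ 2)) 0‖ ^ 2 / (1 + ‖w‖ ^ 2) ≤
      laplacianC (fun t : ℂ => Real.log (1 + ‖w + t • v‖ ^ 2)) 0 :=
  laplacian_dominates_gradient_term_general m w v s hs1
end
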